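/- Let R be a noetherian commutative ring and M a finitely generated R-module. Then the zeroth Fitting ideal of M is contained in the characteristic ideal of M, where the characteristic ideal char_R(M) is defined as the image of the map ⋂^s_R N → ⋂^s_R R^s = R induced by any exact sequence 0 → N → R^s → M → 0 (with ⋂^r_R M := ((⋀^r_R Hom_R(M,R))^* denoting the r-th exterior bi-dual). -/

import Mathlib

open Module

section Defs
variable (R : Type*) [CommRing R]

/-- The `r`-th exterior bi-dual `⋂^r_R M := (⋀^r_R (M^*))^*`, realized canonically as the
module of alternating `R`-multilinear forms on `r` copies of the dual module `M^*`. -/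
abbrev ExtBidual (M : Type*) [AddCommGroup M] [Module R M] (r : ℕ) :=
  (Module.Dual R M) [⋀^Fin r]→ₗ[R] R

/-- Functoriality of the exterior bi-dual. -/
noncomputable def extBidualMap {M N : Type*} [AddCommGroup M] [Module R M]
    [AddCommGroup N] [Module R N] (r : ℕ) (f : M →ₗ[R] N) :
    ExtBidual R M r →ₗ[R] ExtBidual R N r where
  toFun φ := φ.compLinearMap f.dualMap
  map_add' := by intros; ext; rfl
  map_smul' := by intros; ext; rfl

/-- The canonical identification `⋂^s_R (R^s) = R`, given by evaluation at the
standard dual basis. -/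
noncomputable def extEval (s : ℕ) : ExtBidual R (Fin s → R) s →ₗ[R] R where
  toFun φ := φ (fun i => LinearMap.proj i)
  map_add' := by intros; rfl
  map_smul' := by intros; rfl

/-- The characteristic ideal of `M` computed from a presentation `0 → N → R^s → M → 0`
with kernel `N`: the image of the induced map `⋂^s_R N → ⋂^s_R R^s = R`. -/
noncomputable def charIdealAux (s : ℕ) (N : Submodule R (Fin s → R)) : Ideal R :=
  LinearMap.range ((extEval R s) ∘ₗ (extBidualMap R s N.subtype))

/-- The zeroth Fitting ideal of `M` computed from a presentation `0 → N → R^s → M → 0`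
with kernel `N`: the ideal generated by determinants of `s × s` matrices with columns in `N`. -/
def fittIdealAux (s : ℕ) (N : Submodule R (Fin s → R)) : Ideal R :=
  Ideal.span { x | ∃ v : Fin s → (Fin s → R), (∀ i, v i ∈ N) ∧ x = (Matrix.of v).det }
end Defs

/-!
If the columns `v₁, …, v_s` of a matrix lie in `N`, then `φ ↦ det (φᵢ (vⱼ))` is an alternating
form on `s` copies of `N^*`, i.e. an element of `⋂^s_R N`. Its image in `⋂^s_R R^s = R` is the
determinant of the transposed matrix, so every generator of `Fitt⁰_R(M)` lies in `char_R(M)`.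
-/

section DualDet

variable {R : Type*} [CommRing R] {N : Type*} [AddCommGroup N] [Module R N] {s : ℕ}

noncomputable def dualDet (v : Fin s → N) : ExtBidual R N s :=
  Matrix.detRowAlternating.compLinearMap (LinearMap.pi fun j => Module.Dual.eval R N (v j))

theorem dualDet_apply (v : Fin s → N) (φ : Fin s → Module.Dual R N) :
    dualDet v φ = (Matrix.of fun i j => φ i (v j)).det :=
  rfl

theorem extEval_extBidualMap_dualDet (f : N →ₗ[R] (Fin s → R)) (v : Fin s → N) :
    extEval R s (extBidualMap R s f (dualDet v)) = (Matrix.of fun i => f (v i)).det := by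
  rw [← Matrix.det_transpose]
  exact dualDet_apply v _

end DualDet

theorem det_mem_charIdealAux {R : Type*} [CommRing R] {s : ℕ} {N : Submodule R (Fin s → R)}
    {v : Fin s → Fin s → R} (hv : ∀ i, v i ∈ N) : (Matrix.of v).det ∈ charIdealAux R s N :=
  ⟨dualDet fun i => ⟨v i, hv i⟩, extEval_extBidualMap_dualDet N.subtype _⟩

theorem fittIdealAux_le_charIdealAux (R : Type*) [CommRing R] (s : ℕ)
    (N : Submodule R (Fin s → R)) : fittIdealAux R s N ≤ charIdealAux R s N :=
  Ideal.span_le.2 fun _ ⟨_, hv, hx⟩ => hx ▸ det_mem_charIdealAux hv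

theorem fitt_le_char (R : Type*) [CommRing R]
    (M : Type*) [AddCommGroup M] [Module R M]
    (s : ℕ) (π : (Fin s → R) →ₗ[R] M) :
    fittIdealAux R s (LinearMap.ker π) ≤ charIdealAux R s (LinearMap.ker π) :=
  fittIdealAux_le_charIdealAux R s _
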